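/- (Soundness) Let D be a diagram with carrier {x_0,...,x_n}. For every Kripke frame F, every point w_0 of F with F ⊨ e^D(w_0), and every h ∈ ω, the modal formula γ^D_{Ψ_h} is valid at w_0 in F. -/
import Mathlib


/-- A directed path along labelled relations. -/
inductive IsPath {W Λ : Type*} (R : Λ → W → W → Prop) : W → List (Λ × W) → W → Prop
  | nil (x : W) : IsPath R x [] x
  | cons {x y z : W} {l : Λ} {p : List (Λ × W)} :
      R l x y → IsPath R y p z → IsPath R x ((l, y) :: p) z

/-- Rootedness: every point is reachable from the root. -/
def Rooted {W Λ : Type*} (R : Λ → W → W → Prop) (x0 : W) : Prop :=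
  ∀ y : W, ∃ p, IsPath R x0 p y

/-- A tree with root `r`. -/
def IsTree {W Λ : Type*} (R : Λ → W → W → Prop) (r : W) : Prop :=
  (∀ (l : Λ) (z : W), ¬ R l z r) ∧
  ∀ x : W, x ≠ r → ∃! p : List (Λ × W), IsPath R r p x

lemma isPath_append {W Λ : Type*} {R : Λ → W → W → Prop} {x y z : W}
    {p q : List (Λ × W)} (h1 : IsPath R x p y) (h2 : IsPath R y q z) :
    IsPath R x (p ++ q) z := by
  induction h1 with
  | nil => simpa
  | cons hr _ ih => exact IsPath.cons hr (ih h2)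

lemma isPath_last_edge {W Λ : Type*} {R : Λ → W → W → Prop} {x y : W}
    {p : List (Λ × W)} (h1 : IsPath R x p y) (hne : p ≠ []) :
    ∃ l z, R l z y := by
  induction h1 with
  | nil => exact absurd rfl hne
  | cons hr hp ih =>
    cases hp with
    | nil => exact ⟨_, _, hr⟩
    | cons hr' hp' => exact ih (by simp)

/-- (Soundness.)  Let `D` be a diagram on `{x_0,…,x_n}` (with spanning tree `T`)
and `F` a Kripke frame with `F ⊨ e^D(w_0)`.  Fix a valuation `θ` and `h ∈ ω`.
Members of `Ψ_h` are the complete conjunctions `p₁^{ε₁} ∧ … ∧ p_h^{ε_h}`,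
encoded by `κ i : Fin h → Bool`; `H κ i x` expresses the truth at `x` of
`η^D_i(κ)` (η with nominal `j_m` replaced by the member `κ m` of `Ψ_h`),
characterised by the recursive equations.  Then the formula
`γ^D_{Ψ_h} = ⋁_κ η^D(κ)` is true at `w_0`: some `κ` makes `η^D(κ)` true. -/
theorem stmt_11 {W Λ : Type*} (n : ℕ)
    (D : Λ → Fin (n + 1) → Fin (n + 1) → Prop) (hroot : Rooted D 0)
    (T : Λ → Fin (n + 1) → Fin (n + 1) → Prop) (htree : IsTree T 0)
    (hsub : ∀ (l : Λ) (i j : Fin (n + 1)), T l i j → D l i j)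
    (R : Λ → W → W → Prop) (w0 : W)
    (he : ∃ τ : Fin (n + 1) → W, τ 0 = w0 ∧
      ∀ (l : Λ) (i k : Fin (n + 1)), D l i k → R l (τ i) (τ k))
    (h : ℕ) (θ : ℕ → Set W)
    (H : (Fin (n + 1) → Fin h → Bool) → Fin (n + 1) → W → Prop)
    (hH : ∀ (κ : Fin (n + 1) → Fin h → Bool) (i : Fin (n + 1)) (x : W),
      H κ i x ↔
        ((∀ j : Fin h, x ∈ θ j.val ↔ κ i j = true) ∧
          (∀ (l : Λ) (k : Fin (n + 1)), D l i k →
            ∃ y, R l x y ∧ ∀ j : Fin h, y ∈ θ j.val ↔ κ k j = true) ∧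
          (∀ (l : Λ) (k : Fin (n + 1)), T l i k → ∃ y, R l x y ∧ H κ k y))) :
    ∃ κ : Fin (n + 1) → Fin h → Bool, H κ 0 w0 := by
  classical
  obtain ⟨τ, hτ0, hτ⟩ := he
  set κ : Fin (n + 1) → Fin h → Bool := fun i j => decide (τ i ∈ θ j.val) with hκ
  -- the child relation
  set S : Fin (n + 1) → Fin (n + 1) → Prop := fun k i => ∃ l, T l i k with hS
  -- TransGen S gives nonempty paths
  have hpath : ∀ k i, Relation.TransGen S k i → ∃ q, q ≠ [] ∧ IsPath T i q k := by
    intro k i hki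
    induction hki with
    | single hs =>
      obtain ⟨l, hl⟩ := hs
      exact ⟨[(l, k)], by simp, IsPath.cons hl (IsPath.nil k)⟩
    | tail _ hs ih =>
      obtain ⟨l, hl⟩ := hs
      obtain ⟨q, hq, hpq⟩ := ih
      exact ⟨(l, _) :: q, by simp, IsPath.cons hl hpq⟩
  have hirr : Irreflexive (Relation.TransGen S) := by
    intro i hi
    obtain ⟨q, hq, hpq⟩ := hpath i i hi
    by_cases hi0 : i = 0
    · subst hi0
      obtain ⟨l, z, hz⟩ := isPath_last_edge hpq hq
      exact htree.1 l z hz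
    · obtain ⟨p, hp, hup⟩ := htree.2 i hi0
      have h1 : p ++ q = p := hup (p ++ q) (isPath_append hp hpq)
      exact hq (by simpa using h1)
  have hwf : WellFounded S := by
    haveI : IsIrrefl (Fin (n + 1)) (Relation.TransGen S) := ⟨hirr⟩
    exact Subrelation.wf (fun hs => Relation.TransGen.single hs)
      (Finite.wellFounded_of_trans_of_irrefl (Relation.TransGen S))
  have key : ∀ i, H κ i (τ i) := by
    intro i
    induction i using hwf.induction with
    | _ i ih =>
      rw [hH]
      refine ⟨fun j => by simp [hκ], fun l k hD => ⟨τ k, hτ l i k hD, fun j => by simp [hκ]⟩,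
        fun l k hT => ⟨τ k, hτ l i k (hsub l i k hT), ih k ⟨l, hT⟩⟩⟩
  exact ⟨κ, hτ0 ▸ key 0⟩
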